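/- Let A be a real m×n matrix with all rows a_1,…,a_m nonzero, let b ∈ ℝ^m with Ax = b, and let y ∈ ℝ^n with y ≠ x and π_i y ≠ x for every i ∈ {1,…,m}. Then Σ_{i=1}^{m} (‖a_i‖²/‖A‖_F²)·log(‖π_i y − x‖/‖y − x‖) ≤ (1/2)·log(1 − ‖A(y − x)‖²/(‖A‖_F²·‖y − x‖²)). -/

import Mathlib

noncomputable section

/-- The `i`-th row of `A` as a vector in Euclidean space. -/
def rowv {m n : ℕ} (A : Matrix (Fin m) (Fin n) ℝ) (i : Fin m) : EuclideanSpace ℝ (Fin n) :=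
  WithLp.toLp 2 (fun j => A i j)

/-- Matrix-vector multiplication, landing in Euclidean space. -/
def mulV {m n : ℕ} (A : Matrix (Fin m) (Fin n) ℝ) (v : EuclideanSpace ℝ (Fin n)) :
    EuclideanSpace ℝ (Fin m) := WithLp.toLp 2 (fun i => ∑ j, A i j * v j)

/-- The square of the Frobenius norm `‖A‖_F²`. -/
def frobSq {m n : ℕ} (A : Matrix (Fin m) (Fin n) ℝ) : ℝ := ∑ i, ∑ j, (A i j) ^ 2

/-- The operator norm `‖A‖` (ℓ² → ℓ²). -/
def opN {m n : ℕ} (A : Matrix (Fin m) (Fin n) ℝ) : ℝ :=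
  ‖LinearMap.toContinuousLinearMap (Matrix.toEuclideanLin A)‖

/-- Orthogonal projection of `w` onto the hyperplane `{v : ⟨a_i, v⟩ = b_i}`. -/
def proj {m n : ℕ} (A : Matrix (Fin m) (Fin n) ℝ) (b : EuclideanSpace ℝ (Fin m)) (i : Fin m)
    (w : EuclideanSpace ℝ (Fin n)) : EuclideanSpace ℝ (Fin n) :=
  w + ((b i - inner (𝕜 := ℝ) (rowv A i) w) / ‖rowv A i‖ ^ 2) • rowv A i

/-- The Kaczmarz trajectory: `traj A b x0 ω j` is `x_j(ω) = π_{ω_j} ⋯ π_{ω_1} x_0`. -/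
def traj {m n k : ℕ} (A : Matrix (Fin m) (Fin n) ℝ) (b : EuclideanSpace ℝ (Fin m))
    (x0 : EuclideanSpace ℝ (Fin n)) (ω : Fin k → Fin m) : ℕ → EuclideanSpace ℝ (Fin n)
  | 0 => x0
  | j + 1 => if h : j < k then proj A b (ω ⟨j, h⟩) (traj A b x0 ω j) else traj A b x0 ω j

/-- The weight `∏_j ‖a_{ω_j}‖²/‖A‖_F²` of an index sequence `ω` for the random Kaczmarz
process. -/
def wt {m n k : ℕ} (A : Matrix (Fin m) (Fin n) ℝ) (ω : Fin k → Fin m) : ℝ :=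
  ∏ j, ‖rowv A (ω j)‖ ^ 2 / frobSq A

end

/-! Because `Ax = b`, the vector `π_i y − x` is the orthogonal projection of `e = y − x` onto
`a_iᗮ`, so `‖π_i y − x‖² = ‖e‖² − ⟨a_i, e⟩²/‖a_i‖²`. Averaging with the weights
`‖a_i‖²/‖A‖_F²` gives the one-step identity `E‖π_i y − x‖² = ‖e‖² − ‖Ae‖²/‖A‖_F²`. Since
`log(‖π_i y − x‖/‖e‖)` is half the logarithm of its square, Jensen's inequality for the concave
logarithm bounds the average of these logarithms by half the logarithm of the averaged squares. -/

theorem norm_sub_smul_inner_div_sq {E : Type*} [NormedAddCommGroup E] [InnerProductSpace ℝ E]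
    (a e : E) : ‖e - (inner ℝ a e / ‖a‖ ^ 2) • a‖ ^ 2 = ‖e‖ ^ 2 - inner ℝ a e ^ 2 / ‖a‖ ^ 2 := by
  rcases eq_or_ne a 0 with rfl | ha
  · simp
  have : ‖a‖ ≠ 0 := norm_ne_zero_iff.mpr ha
  rw [norm_sub_sq_real, inner_smul_right, norm_smul, mul_pow, Real.norm_eq_abs, sq_abs,
    real_inner_comm]
  field_simp
  ring

theorem sum_mul_log_le_half_log_sum_mul_sq {ι : Type*} (s : Finset ι) {w t : ι → ℝ}
    (hw : ∀ i ∈ s, 0 ≤ w i) (hw₁ : ∑ i ∈ s, w i = 1) (ht : ∀ i ∈ s, t i ≠ 0) :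
    ∑ i ∈ s, w i * Real.log (t i) ≤ 1 / 2 * Real.log (∑ i ∈ s, w i * t i ^ 2) := by
  have hjensen := strictConcaveOn_log_Ioi.concaveOn.le_map_sum hw hw₁
    (p := fun i => t i ^ 2) fun i hi => Set.mem_Ioi.mpr (by have := ht i hi; positivity)
  have hlog_sq : ∑ i ∈ s, w i * Real.log (t i ^ 2) = 2 * ∑ i ∈ s, w i * Real.log (t i) := by
    rw [Finset.mul_sum]
    exact Finset.sum_congr rfl fun i _ => by rw [Real.log_pow]; push_cast; ring
  simp only [smul_eq_mul, hlog_sq] at hjensen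
  linarith

section Kaczmarz

variable {m n : ℕ} (A : Matrix (Fin m) (Fin n) ℝ)

theorem inner_rowv (v : EuclideanSpace ℝ (Fin n)) (i : Fin m) :
    inner ℝ (rowv A i) v = mulV A v i := by
  simp [rowv, mulV, PiLp.inner_apply, mul_comm]

theorem norm_mulV_sq (v : EuclideanSpace ℝ (Fin n)) :
    ‖mulV A v‖ ^ 2 = ∑ i, inner ℝ (rowv A i) v ^ 2 := by
  simp [EuclideanSpace.norm_sq_eq, inner_rowv]

theorem frobSq_eq_sum_norm_rowv_sq : frobSq A = ∑ i, ‖rowv A i‖ ^ 2 := by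
  simp [frobSq, EuclideanSpace.norm_sq_eq, rowv]

theorem frobSq_nonneg : 0 ≤ frobSq A := by
  rw [frobSq_eq_sum_norm_rowv_sq]; positivity

theorem sum_norm_rowv_sq_div_frobSq {A : Matrix (Fin m) (Fin n) ℝ} (hA : frobSq A ≠ 0) :
    ∑ i, ‖rowv A i‖ ^ 2 / frobSq A = 1 := by
  rw [← Finset.sum_div, ← frobSq_eq_sum_norm_rowv_sq, div_self hA]

variable {A} {b : EuclideanSpace ℝ (Fin m)} {x : EuclideanSpace ℝ (Fin n)}

theorem proj_sub_eq (hAx : mulV A x = b) (i : Fin m) (y : EuclideanSpace ℝ (Fin n)) :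
    proj A b i y - x = (y - x) - (inner ℝ (rowv A i) (y - x) / ‖rowv A i‖ ^ 2) • rowv A i := by
  have hb : b i = inner ℝ (rowv A i) x := by rw [← hAx, inner_rowv]
  rw [proj, hb, inner_sub_right]
  module

theorem norm_proj_sub_sq (hAx : mulV A x = b) (i : Fin m) (y : EuclideanSpace ℝ (Fin n)) :
    ‖proj A b i y - x‖ ^ 2 = ‖y - x‖ ^ 2 - inner ℝ (rowv A i) (y - x) ^ 2 / ‖rowv A i‖ ^ 2 := by
  rw [proj_sub_eq hAx, norm_sub_smul_inner_div_sq]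

theorem sum_weight_mul_norm_proj_sub_sq (hA : frobSq A ≠ 0) (hAx : mulV A x = b)
    (y : EuclideanSpace ℝ (Fin n)) :
    ∑ i, ‖rowv A i‖ ^ 2 / frobSq A * ‖proj A b i y - x‖ ^ 2
      = ‖y - x‖ ^ 2 - ‖mulV A (y - x)‖ ^ 2 / frobSq A := by
  have hterm : ∀ i, ‖rowv A i‖ ^ 2 / frobSq A * ‖proj A b i y - x‖ ^ 2
      = ‖rowv A i‖ ^ 2 / frobSq A * ‖y - x‖ ^ 2 - inner ℝ (rowv A i) (y - x) ^ 2 / frobSq A := by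
    intro i
    rcases eq_or_ne (rowv A i) 0 with h | h
    · simp [h]
    have : ‖rowv A i‖ ≠ 0 := norm_ne_zero_iff.mpr h
    rw [norm_proj_sub_sq hAx]
    field_simp
  simp only [hterm, Finset.sum_sub_distrib, ← Finset.sum_mul, sum_norm_rowv_sq_div_frobSq hA,
    one_mul, ← Finset.sum_div, norm_mulV_sq]

end Kaczmarz

theorem one_step_log_bound_general {m n : ℕ} (A : Matrix (Fin m) (Fin n) ℝ)
    (x : EuclideanSpace ℝ (Fin n))
    (b : EuclideanSpace ℝ (Fin m)) (hAx : mulV A x = b)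
    (y : EuclideanSpace ℝ (Fin n)) (hy : y ≠ x) (hproj : ∀ i : Fin m, proj A b i y ≠ x) :
    ∑ i : Fin m, (‖rowv A i‖ ^ 2 / frobSq A) * Real.log (‖proj A b i y - x‖ / ‖y - x‖) ≤
      (1 / 2) * Real.log (1 - ‖mulV A (y - x)‖ ^ 2 / (frobSq A * ‖y - x‖ ^ 2)) := by
  rcases (frobSq_nonneg A).eq_or_lt with hA | hA
  · -- all weights and the quotient on the right are junk divisions by `0`
    simp [← hA]
  have he : ‖y - x‖ ≠ 0 := norm_ne_zero_iff.mpr (sub_ne_zero.mpr hy)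
  calc _ ≤ 1 / 2 * Real.log
          (∑ i, ‖rowv A i‖ ^ 2 / frobSq A * (‖proj A b i y - x‖ / ‖y - x‖) ^ 2) :=
        sum_mul_log_le_half_log_sum_mul_sq _ (fun i _ => by positivity)
          (sum_norm_rowv_sq_div_frobSq hA.ne')
          fun i _ => div_ne_zero (norm_ne_zero_iff.mpr (sub_ne_zero.mpr (hproj i))) he
    _ = _ := by
        simp only [div_pow, ← mul_div_assoc, ← Finset.sum_div,
          sum_weight_mul_norm_proj_sub_sq hA.ne' hAx]
        field_simp

/-- **One-step logarithmic bound.** For `y ≠ x` with `Ax = b` and `π_i y ≠ x` for all `i`,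
`Σ_i (‖a_i‖²/‖A‖_F²) log(‖π_i y − x‖/‖y−x‖) ≤ (1/2) log(1 − ‖A(y−x)‖²/(‖A‖_F² ‖y−x‖²))`. -/
theorem one_step_log_bound {m n : ℕ} (A : Matrix (Fin m) (Fin n) ℝ)
    (hrows : ∀ i, rowv A i ≠ 0) (x : EuclideanSpace ℝ (Fin n))
    (b : EuclideanSpace ℝ (Fin m)) (hAx : mulV A x = b)
    (y : EuclideanSpace ℝ (Fin n)) (hy : y ≠ x) (hproj : ∀ i : Fin m, proj A b i y ≠ x) :
    ∑ i : Fin m, (‖rowv A i‖ ^ 2 / frobSq A) * Real.log (‖proj A b i y - x‖ / ‖y - x‖) ≤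
      (1 / 2) * Real.log (1 - ‖mulV A (y - x)‖ ^ 2 / (frobSq A * ‖y - x‖ ^ 2)) :=
  one_step_log_bound_general A x b hAx y hy hproj
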